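/- The induced subgraph of Z^22 on the slab F = Q_{l,m} ∩ {n ∈ Z^22 : |n_i| ≤ b for i = 4,…,22}, for m < l/2 and b ≥ m suitable, restricted to the component of the origin, is roughly isometric to Z^3. -/

import Mathlib

open scoped Classical

/-- The standard lattice graph on `ℤ^d`: two vertices are adjacent iff their
`ℓ¹`-distance is `1`. -/
def latticeGraph (d : ℕ) : SimpleGraph (Fin d → ℤ) where
  Adj x y := ∑ i, (x i - y i).natAbs = 1
  symm := by
    constructor
    intro x y h
    rw [show (∑ i, (y i - x i).natAbs) = ∑ i, (x i - y i).natAbs from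
      Finset.sum_congr rfl fun i _ => by rw [← Int.natAbs_neg, neg_sub]]
    exact h
  loopless := by constructor; intro x h; simp at h

/-- Rough isometry between two graphs, with the shortest-path metrics. -/
def RoughIsom {V W : Type} (G : SimpleGraph V) (H : SimpleGraph W) : Prop :=
  ∃ C : ℝ, 1 ≤ C ∧ ∃ φ : V → W,
    (∀ x y : V,
      (1 / C) * (G.dist x y : ℝ) - C ≤ (H.dist (φ x) (φ y) : ℝ) ∧
      (H.dist (φ x) (φ y) : ℝ) ≤ C * (G.dist x y : ℝ) + C) ∧
    (∀ w : W, ∃ x : V, (H.dist w (φ x) : ℝ) ≤ C)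

/-- The heat kernel of the lazy simple random walk on a locally finite graph:
at each step the walker stays put with probability `1/2` and otherwise moves to a
uniformly chosen neighbour. -/
noncomputable def lazyKernel {V : Type} (G : SimpleGraph V)
    (hfin : ∀ v, Fintype (G.neighborSet v)) : ℕ → V → V → ℝ
  | 0, u, v => if u = v then 1 else 0
  | t + 1, u, v =>
      (1 / 2) * lazyKernel G hfin t u v +
        ∑ z ∈ @SimpleGraph.neighborFinset V G u (hfin u),
          (1 / (2 * (@SimpleGraph.degree V G u (hfin u) : ℝ))) * lazyKernel G hfin t z v

/-- `Q_{l,m}`: the union over all 19-element index sets `I ⊆ {1,…,22}` of the sets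
`⋂_{i∈I} {n ∈ ℤ²² : |n_i mod l| ≤ m}`, using the balanced residue `Int.bmod`. -/
def Qset (l m : ℕ) : Set (Fin 22 → ℤ) :=
  {n | ∃ I : Finset (Fin 22), I.card = 19 ∧ ∀ i ∈ I, |Int.bmod (n i) l| ≤ (m : ℤ)}

/-- The slab `F = Q_{l,m} ∩ {|n_i| ≤ b for i = 4,…,22}`. -/
def Fset (l m b : ℕ) : Set (Fin 22 → ℤ) :=
  {n | n ∈ Qset l m ∧ ∀ i : Fin 22, 3 ≤ (i : ℕ) → |n i| ≤ (b : ℤ)}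

/-- The connected component of the origin inside the induced subgraph on `F`. -/
def F0 (l m b : ℕ) : Set (Fin 22 → ℤ) :=
  {n | ∃ (hn : n ∈ Fset l m b) (h0 : (fun _ => 0 : Fin 22 → ℤ) ∈ Fset l m b),
    ((latticeGraph 22).induce (Fset l m b)).Reachable ⟨fun _ => 0, h0⟩ ⟨n, hn⟩}

namespace Stmt14aux
open SimpleGraph Finset

/-! ### Generic walk machinery in lattice graphs -/

/-- `c` lies between `a` and `b` (inclusive). -/
def Btw (a b c : ℤ) : Prop := (a ≤ c ∧ c ≤ b) ∨ (b ≤ c ∧ c ≤ a)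

lemma btw_left (a b : ℤ) : Btw a b a := by unfold Btw; omega

lemma btw_abs {a b c B : ℤ} (h : Btw a b c) (ha : |a| ≤ B) (hb : |b| ≤ B) : |c| ≤ B := by
  rw [abs_le] at *
  unfold Btw at h
  omega

lemma lattice_adj_update {d : ℕ} (x : Fin d → ℤ) (i : Fin d) (e : ℤ) (he : e.natAbs = 1) :
    (latticeGraph d).Adj x (Function.update x i (x i + e)) := by
  show (∑ j, (x j - Function.update x i (x i + e) j).natAbs) = 1
  rw [Finset.sum_eq_single i]
  · rw [Function.update_self]
    have : x i - (x i + e) = -e := by ring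
    rw [this, Int.natAbs_neg, he]
  · intro j _ hj
    rw [Function.update_of_ne hj]
    simp
  · simp

lemma l1_triangle {d : ℕ} (x y z : Fin d → ℤ) :
    ∑ i, (x i - z i).natAbs ≤ (∑ i, (x i - y i).natAbs) + ∑ i, (y i - z i).natAbs := by
  rw [← Finset.sum_add_distrib]
  refine Finset.sum_le_sum fun i _ => ?_
  have h : x i - z i = (x i - y i) + (y i - z i) := by ring
  rw [h]
  exact Int.natAbs_add_le _ _

lemma l1_le_walk_length {d : ℕ} {x y : Fin d → ℤ} (w : (latticeGraph d).Walk x y) :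
    ∑ i, (x i - y i).natAbs ≤ w.length := by
  induction w with
  | nil => simp
  | @cons u v z h w ih =>
    rw [SimpleGraph.Walk.length_cons]
    calc ∑ i, (u i - z i).natAbs ≤ (∑ i, (u i - v i).natAbs) + ∑ i, (v i - z i).natAbs :=
          l1_triangle u v z
      _ ≤ 1 + w.length := by
          have : (∑ i, (u i - v i).natAbs) = 1 := h
          omega
      _ = w.length + 1 := by omega

/-- Walk moving a single coordinate monotonically to `t`. -/
lemma walk_seg {d : ℕ} {S : Set (Fin d → ℤ)} (i : Fin d) :
    ∀ (k : ℕ) (p : Fin d → ℤ) (t : ℤ), (p i - t).natAbs = k →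
    (∀ c : ℤ, Btw (p i) t c → Function.update p i c ∈ S) →
    ∃ (hp : p ∈ S) (hq : Function.update p i t ∈ S)
      (w : ((latticeGraph d).induce S).Walk ⟨p, hp⟩ ⟨Function.update p i t, hq⟩),
      w.length = k := by
  intro k
  induction k with
  | zero =>
    intro p t hk hmem
    have ht : t = p i := by omega
    have hp : p ∈ S := by
      have := hmem (p i) (btw_left _ _)
      rwa [Function.update_eq_self] at this
    have hq : Function.update p i t ∈ S := by rw [ht, Function.update_eq_self]; exact hp
    have heq : (⟨p, hp⟩ : S) = ⟨Function.update p i t, hq⟩ := by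
      refine Subtype.ext ?_
      show p = Function.update p i t
      rw [ht, Function.update_eq_self]
    exact ⟨hp, hq, SimpleGraph.Walk.nil.copy rfl heq, by simp⟩
  | succ k ih =>
    intro p t hk hmem
    have hne : p i ≠ t := by omega
    obtain ⟨e, he1, he2, he3⟩ : ∃ e : ℤ, e.natAbs = 1 ∧ ((p i + e) - t).natAbs = k ∧
        Btw (p i) t (p i + e) := by
      rcases lt_or_gt_of_ne hne with h | h
      · exact ⟨1, rfl, by omega, by unfold Btw; omega⟩
      · exact ⟨-1, by decide, by omega, by unfold Btw; omega⟩
    have hp : p ∈ S := by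
      have := hmem (p i) (btw_left _ _)
      rwa [Function.update_eq_self] at this
    set p' : Fin d → ℤ := Function.update p i (p i + e) with hp'def
    have hp'i : p' i = p i + e := Function.update_self _ _ _
    have hp's : p' ∈ S := hmem _ he3
    have hmem' : ∀ c : ℤ, Btw (p' i) t c → Function.update p' i c ∈ S := by
      intro c hc
      rw [hp'def, Function.update_idem]
      refine hmem c ?_
      rw [hp'i] at hc
      unfold Btw at he3 hc ⊢
      omega
    obtain ⟨hp'2, hq', w, hw⟩ := ih p' t (by rw [hp'i]; exact he2) hmem'
    have hqeq : Function.update p' i t = Function.update p i t := by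
      rw [hp'def, Function.update_idem]
    have hq : Function.update p i t ∈ S := hqeq ▸ hq'
    have hadj : ((latticeGraph d).induce S).Adj ⟨p, hp⟩ ⟨p', hp's⟩ := by
      show (latticeGraph d).Adj p p'
      exact lattice_adj_update p i e he1
    have heq2 : (⟨Function.update p' i t, hq'⟩ : S) = ⟨Function.update p i t, hq⟩ :=
      Subtype.ext hqeq
    refine ⟨hp, hq, SimpleGraph.Walk.cons hadj (w.copy rfl heq2), ?_⟩
    rw [SimpleGraph.Walk.length_cons, SimpleGraph.Walk.length_copy, hw]

/-- Walk moving several coordinates (those in `D`), one at a time. -/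
lemma walk_multi {d : ℕ} {S : Set (Fin d → ℤ)} (q : Fin d → ℤ) :
    ∀ (D : Finset (Fin d)) (p : Fin d → ℤ),
    (∀ i ∉ D, p i = q i) →
    (∀ r : Fin d → ℤ, ∀ i ∈ D, (∀ j ∉ D, r j = p j) →
      (∀ j ∈ D, j ≠ i → r j = p j ∨ r j = q j) →
      Btw (p i) (q i) (r i) → r ∈ S) →
    ∀ (hp : p ∈ S),
    ∃ (hq : q ∈ S) (w : ((latticeGraph d).induce S).Walk ⟨p, hp⟩ ⟨q, hq⟩),
      w.length ≤ ∑ i, (p i - q i).natAbs := by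
  intro D
  induction D using Finset.induction_on with
  | empty =>
    intro p hpq _H hp
    have : p = q := funext fun i => hpq i (by simp)
    subst this
    exact ⟨hp, SimpleGraph.Walk.nil, by simp⟩
  | @insert i D' hiD ih =>
    intro p hpq H hp
    have hseg := walk_seg (S := S) i ((p i - q i).natAbs) p (q i) rfl ?hmem
    case hmem =>
      intro c hc
      refine H (Function.update p i c) i (Finset.mem_insert_self i D') ?_ ?_ ?_
      · intro j hj
        have hji : j ≠ i := fun h => hj (by rw [h]; exact Finset.mem_insert_self i D')
        exact Function.update_of_ne hji _ _
      · intro j _ hji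
        exact Or.inl (Function.update_of_ne hji _ _)
      · rwa [Function.update_self]
    obtain ⟨hp0, hq0, w1, hw1⟩ := hseg
    obtain ⟨p', hp'def⟩ : ∃ p', p' = Function.update p i (q i) := ⟨_, rfl⟩
    have hp'i : p' i = q i := by rw [hp'def, Function.update_self]
    have hp'ne : ∀ j, j ≠ i → p' j = p j := by
      intro j hj; rw [hp'def, Function.update_of_ne hj]
    have hq0' : p' ∈ S := hp'def ▸ hq0
    have hpq' : ∀ j ∉ D', p' j = q j := by
      intro j hj
      by_cases hji : j = i
      · subst hji; exact hp'i
      · rw [hp'ne j hji]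
        exact hpq j (by simp [hji, hj])
    have H' : ∀ r : Fin d → ℤ, ∀ i' ∈ D', (∀ j ∉ D', r j = p' j) →
        (∀ j ∈ D', j ≠ i' → r j = p' j ∨ r j = q j) →
        Btw (p' i') (q i') (r i') → r ∈ S := by
      intro r i' hi' h1 h2 h3
      have hii' : i' ≠ i := fun h => hiD (by rw [← h]; exact hi')
      refine H r i' (Finset.mem_insert_of_mem hi') ?_ ?_ ?_
      · intro j hj
        have hji : j ≠ i := fun h => hj (by rw [h]; exact Finset.mem_insert_self i D')
        have : r j = p' j := h1 j (fun h => hj (Finset.mem_insert_of_mem h))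
        rwa [hp'ne j hji] at this
      · intro j hj hji'
        rcases Finset.mem_insert.mp hj with hj | hj
        · subst hj
          right
          rw [h1 j hiD, hp'i]
        · rcases h2 j hj hji' with h | h
          · left
            have hji : j ≠ i := fun hh => hiD (by rw [← hh]; exact hj)
            rwa [hp'ne j hji] at h
          · right; exact h
      · rwa [hp'ne i' hii'] at h3
    obtain ⟨hq, w2, hw2⟩ := ih p' hpq' H' hq0'
    have hw1end : (⟨Function.update p i (q i), hq0⟩ : S) = ⟨p', hq0'⟩ :=
      Subtype.ext hp'def.symm
    refine ⟨hq, (w1.copy rfl hw1end).append w2, ?_⟩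
    rw [SimpleGraph.Walk.length_append, SimpleGraph.Walk.length_copy, hw1]
    have key : ∀ j, (p' j - q j).natAbs = if j = i then 0 else (p j - q j).natAbs := by
      intro j
      by_cases hji : j = i
      · subst hji; rw [hp'i]; simp
      · rw [hp'ne j hji, if_neg hji]
    have h1 : ∑ j, (p' j - q j).natAbs = ∑ j ∈ Finset.univ.erase i, (p j - q j).natAbs := by
      rw [← Finset.sum_erase_add _ _ (Finset.mem_univ i), key i, if_pos rfl, add_zero]
      refine Finset.sum_congr rfl fun j hj => ?_
      rw [key j, if_neg (Finset.mem_erase.mp hj).1]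
    have h2 : ∑ j, (p j - q j).natAbs
        = (∑ j ∈ Finset.univ.erase i, (p j - q j).natAbs) + (p i - q i).natAbs :=
      (Finset.sum_erase_add _ _ (Finset.mem_univ i)).symm
    omega

/-! ### bmod arithmetic -/

/-- `v` has small balanced residue mod `l`. -/
def good (l m : ℕ) (v : ℤ) : Prop := |Int.bmod v l| ≤ (m : ℤ)

lemma bmod_eq_self {l m : ℕ} (hml : 2 * m < l) {v : ℤ} (hv : |v| ≤ (m : ℤ)) :
    Int.bmod v l = v := by
  have hl : (0 : ℤ) < l := by exact_mod_cast (by omega : 0 < l)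
  have habs : -(m : ℤ) ≤ v ∧ v ≤ (m : ℤ) := abs_le.mp hv
  have hdiv := Int.mul_ediv_add_emod ((l : ℤ) + 1) 2
  have hmod2 : (0:ℤ) ≤ ((l:ℤ)+1) % 2 ∧ ((l:ℤ)+1) % 2 < 2 :=
    ⟨Int.emod_nonneg _ (by norm_num), Int.emod_lt_of_pos _ (by norm_num)⟩
  have hml' : 2 * (m : ℤ) < (l : ℤ) := by exact_mod_cast hml
  rw [Int.bmod_def]
  rcases le_or_gt 0 v with hv0 | hv0
  · have hemod : v % (l : ℤ) = v := Int.emod_eq_of_lt hv0 (by omega)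
    rw [hemod, if_pos (by omega)]
  · have hemod : v % (l : ℤ) = v + l := by
      have h1 : (v + (l:ℤ) * 1) % (l:ℤ) = v % (l:ℤ) := Int.add_mul_emod_self_left ..
      rw [mul_one] at h1
      rw [← h1]
      exact Int.emod_eq_of_lt (by omega) (by omega)
    rw [hemod, if_neg (by omega)]
    ring

lemma good_of_small {l m : ℕ} (hml : 2 * m < l) {v : ℤ} (hv : |v| ≤ (m : ℤ)) :
    good l m v := by
  unfold good
  rw [bmod_eq_self hml hv]
  exact hv

lemma good_zero {l m : ℕ} (hml : 2 * m < l) : good l m 0 :=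
  good_of_small hml (by simp)

lemma good_mul {l m : ℕ} (hml : 2 * m < l) (k : ℤ) : good l m ((l : ℤ) * k) := by
  unfold good
  have hl : (0 : ℤ) < l := by exact_mod_cast (by omega : 0 < l)
  rw [Int.bmod_def]
  have hemod : ((l : ℤ) * k) % (l : ℤ) = 0 := Int.mul_emod_right _ _
  have hdiv := Int.mul_ediv_add_emod ((l : ℤ) + 1) 2
  have hmod2 : (0:ℤ) ≤ ((l:ℤ)+1) % 2 ∧ ((l:ℤ)+1) % 2 < 2 :=
    ⟨Int.emod_nonneg _ (by norm_num), Int.emod_lt_of_pos _ (by norm_num)⟩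
  rw [hemod, if_pos (by omega)]
  simp

/-! ### Membership in Fset -/

variable {l m b : ℕ}

lemma mem_Fset_of (J : Finset (Fin 22)) (hJ : J.card = 3) {n : Fin 22 → ℤ}
    (hgood : ∀ i ∉ J, good l m (n i))
    (hbd : ∀ i : Fin 22, 3 ≤ (i : ℕ) → |n i| ≤ (b : ℤ)) : n ∈ Fset l m b := by
  refine ⟨⟨Jᶜ, ?_, fun i hi => hgood i (by simpa using hi)⟩, hbd⟩
  rw [Finset.card_compl, hJ]
  rfl

lemma exists_J {n : Fin 22 → ℤ} (hn : n ∈ Fset l m b) :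
    ∃ J : Finset (Fin 22), J.card = 3 ∧ ∀ i ∉ J, good l m (n i) := by
  obtain ⟨⟨I, hI, hIgood⟩, _⟩ := hn
  refine ⟨Iᶜ, ?_, fun i hi => hIgood i (by simpa using hi)⟩
  rw [Finset.card_compl, hI]
  rfl

/-- The base point: first three coordinates kept, the rest zeroed. -/
def baseP (a : Fin 22 → ℤ) : Fin 22 → ℤ := fun i => if (i : ℕ) < 3 then a i else 0

/-- The head finset `{0,1,2} ⊆ Fin 22`. -/
def hd3 : Finset (Fin 22) := Finset.univ.filter (fun i => (i : ℕ) < 3)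

lemma hd3_card : hd3.card = 3 := by decide

lemma tl19_card : (Finset.univ.filter (fun i : Fin 22 => 3 ≤ (i : ℕ))).card = 19 := by decide

lemma sum_le_22 (f : Fin 22 → ℕ) (c : ℕ) (h : ∀ i, f i ≤ c) : ∑ i, f i ≤ 22 * c := by
  calc ∑ i, f i ≤ Finset.univ.card • c := Finset.sum_le_card_nsmul _ _ _ (fun i _ => h i)
    _ = 22 * c := by rw [Finset.card_univ, Fintype.card_fin, smul_eq_mul]

/-! ### The key connecting lemma -/

section Key

variable (hml : 2 * m < l)

/-- Phase-A endpoint: make the first three coordinates good. -/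
noncomputable def pA (l m : ℕ) (n : Fin 22 → ℤ) : Fin 22 → ℤ :=
  fun i => if (i : ℕ) < 3 ∧ ¬ good l m (n i) then (l : ℤ) * (n i / l) else n i

/-- Phase-B endpoint: additionally, zero the tail coordinates lying in `J₀`. -/
noncomputable def pB (l m : ℕ) (J₀ : Finset (Fin 22)) (n : Fin 22 → ℤ) : Fin 22 → ℤ :=
  fun i => if 3 ≤ (i : ℕ) ∧ i ∈ J₀ then 0 else pA l m n i

include hml in
lemma pA_good (n : Fin 22 → ℤ) (i : Fin 22) (h3 : (i : ℕ) < 3) : good l m (pA l m n i) := by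
  unfold pA
  by_cases h : good l m (n i)
  · rw [if_neg (by tauto)]; exact h
  · rw [if_pos ⟨h3, h⟩]; exact good_mul hml _

lemma pA_eq_of_ge (n : Fin 22 → ℤ) (i : Fin 22) (h : 3 ≤ (i : ℕ)) : pA l m n i = n i := by
  unfold pA; rw [if_neg (by omega)]

lemma pA_eq_of_good {n : Fin 22 → ℤ} {i : Fin 22} (h : good l m (n i)) : pA l m n i = n i := by
  unfold pA; rw [if_neg (by tauto)]

lemma pA_dist_le (hml : 2 * m < l) (n : Fin 22 → ℤ) (i : Fin 22) :
    (n i - pA l m n i).natAbs ≤ l := by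
  unfold pA
  by_cases h : (i : ℕ) < 3 ∧ ¬ good l m (n i)
  · rw [if_pos h]
    have hl : (0 : ℤ) < l := by exact_mod_cast (by omega : 0 < l)
    have hd : n i - (l : ℤ) * (n i / l) = n i % l := (Int.emod_def _ _).symm
    rw [hd]
    have h1 : 0 ≤ n i % (l:ℤ) := Int.emod_nonneg _ (by omega)
    have h2 : n i % (l:ℤ) < l := Int.emod_lt_of_pos _ hl
    omega
  · rw [if_neg h]; simp

set_option maxHeartbeats 2000000 in
include hml in
/-- Any point of `F` is joined inside `F` to its base point by a short walk. -/
lemma key {n : Fin 22 → ℤ} (hn : n ∈ Fset l m b) :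
    ∃ (hb2 : baseP n ∈ Fset l m b)
      (w : ((latticeGraph 22).induce (Fset l m b)).Walk ⟨n, hn⟩ ⟨baseP n, hb2⟩),
      w.length ≤ 88 * (l + b) := by
  obtain ⟨J₀, hJcard, hJgood⟩ := exists_J hn
  have hbd : ∀ i : Fin 22, 3 ≤ (i : ℕ) → |n i| ≤ (b : ℤ) := hn.2
  -- abbreviations
  have hbd' : ∀ i : Fin 22, 3 ≤ (i : ℕ) → |pA l m n i| ≤ (b : ℤ) := by
    intro i hi; rw [pA_eq_of_ge n i hi]; exact hbd i hi
  have hAgood : ∀ i : Fin 22, i ∉ J₀ → good l m (pA l m n i) := by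
    intro i hi
    by_cases h3 : (i : ℕ) < 3
    · exact pA_good hml n i h3
    · rw [pA_eq_of_ge n i (by omega)]; exact hJgood i hi
  have hBgood : ∀ i : Fin 22, good l m (pB l m J₀ n i) := by
    intro i
    unfold pB
    by_cases h : 3 ≤ (i : ℕ) ∧ i ∈ J₀
    · rw [if_pos h]; exact good_zero hml
    · rw [if_neg h]
      by_cases h3 : (i : ℕ) < 3
      · exact pA_good hml n i h3
      · rw [pA_eq_of_ge n i (by omega)]
        exact hJgood i (fun hiJ => h ⟨by omega, hiJ⟩)
  have hBbd : ∀ i : Fin 22, 3 ≤ (i : ℕ) → |pB l m J₀ n i| ≤ (b : ℤ) := by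
    intro i hi
    unfold pB
    by_cases h : 3 ≤ (i : ℕ) ∧ i ∈ J₀
    · rw [if_pos h]; simp
    · rw [if_neg h]; exact hbd' i hi
  -- Phase A : n → pA
  obtain ⟨hA, wA, hwA⟩ := walk_multi (S := Fset l m b) (pA l m n) J₀ n
    (fun i hi => by
      by_cases h3 : (i : ℕ) < 3
      · by_cases hg : good l m (n i)
        · exact (pA_eq_of_good hg).symm
        · exact absurd (hJgood i hi) hg
      · exact (pA_eq_of_ge n i (by omega)).symm)
    (fun r i hi h1 h2 h3 => by
      refine mem_Fset_of J₀ hJcard (fun j hj => ?_) (fun j hj => ?_)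
      · rw [h1 j hj]; exact hJgood j hj
      · by_cases hjD : j ∈ J₀
        · by_cases hji : j = i
          · subst hji
            have : pA l m n j = n j := pA_eq_of_ge n j hj
            rw [this] at h3
            exact btw_abs h3 (hbd j hj) (hbd j hj)
          · rcases h2 j hjD hji with h | h
            · rw [h]; exact hbd j hj
            · rw [h]; exact hbd' j hj
        · rw [h1 j hjD]; exact hbd j hj)
    hn
  -- Phase B : pA → pB
  obtain ⟨hB, wB, hwB⟩ := walk_multi (S := Fset l m b) (pB l m J₀ n) J₀ (pA l m n)
    (fun i hi => by unfold pB; rw [if_neg (fun hc => hi hc.2)])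
    (fun r i hi h1 h2 h3 => by
      refine mem_Fset_of J₀ hJcard (fun j hj => ?_) (fun j hj => ?_)
      · rw [h1 j hj]; exact hAgood j hj
      · by_cases hjD : j ∈ J₀
        · by_cases hji : j = i
          · subst hji
            exact btw_abs h3 (hbd' j hj) (hBbd j hj)
          · rcases h2 j hjD hji with h | h
            · rw [h]; exact hbd' j hj
            · rw [h]; exact hBbd j hj
        · rw [h1 j hjD]; exact hbd' j hj)
    hA
  -- Phase C : pB → baseP (pA)
  obtain ⟨hC, wC, hwC⟩ := walk_multi (S := Fset l m b)
    (baseP (pA l m n)) (Finset.univ.filter (fun i : Fin 22 => 3 ≤ (i : ℕ))) (pB l m J₀ n)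
    (fun i hi => by
      have h3 : (i : ℕ) < 3 := by simpa using hi
      unfold pB baseP
      rw [if_neg (by omega), if_pos h3])
    (fun r i hi h1 h2 h3 => by
      have hi3 : 3 ≤ (i : ℕ) := by simpa using hi
      have hi0 : ¬ ((0 : Fin 22) = i) :=
        fun h => absurd hi3 (h ▸ (by decide : ¬ 3 ≤ (((0 : Fin 22)) : ℕ)))
      have hi1 : ¬ ((1 : Fin 22) = i) :=
        fun h => absurd hi3 (h ▸ (by decide : ¬ 3 ≤ (((1 : Fin 22)) : ℕ)))
      have hcard : ({(0 : Fin 22), (1 : Fin 22), i} : Finset (Fin 22)).card = 3 := by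
        rw [Finset.card_insert_of_notMem, Finset.card_insert_of_notMem, Finset.card_singleton]
        · simpa using hi1
        · simp only [Finset.mem_insert, Finset.mem_singleton]
          push_neg
          exact ⟨by decide, hi0⟩
      refine mem_Fset_of _ hcard (fun j hj => ?_) (fun j hj => ?_)
      · simp only [Finset.mem_insert, Finset.mem_singleton, not_or] at hj
        obtain ⟨hj0, hj1, hji⟩ := hj
        by_cases hj3 : (j : ℕ) < 3
        · rw [h1 j (by simp; omega)]
          exact hBgood j
        · rcases h2 j (by simp; omega) hji with h | h
          · rw [h]; exact hBgood j
          · rw [h]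
            unfold baseP
            rw [if_neg hj3]
            exact good_zero hml
      · by_cases hji : j = i
        · subst hji
          refine btw_abs h3 (hBbd j hj) ?_
          unfold baseP
          rw [if_neg (by omega)]
          simp
        · rcases h2 j (by simp; omega) hji with h | h
          · rw [h]; exact hBbd j hj
          · rw [h]
            unfold baseP
            rw [if_neg (by omega)]
            simp)
    hB
  -- Phase D : baseP (pA) → baseP n
  obtain ⟨hD, wD, hwD⟩ := walk_multi (S := Fset l m b) (baseP n) hd3 (baseP (pA l m n))
    (fun i hi => by
      have h3 : ¬ (i : ℕ) < 3 := by simpa [hd3] using hi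
      unfold baseP
      rw [if_neg h3, if_neg h3])
    (fun r i hi h1 h2 h3 => by
      refine mem_Fset_of hd3 hd3_card (fun j hj => ?_) (fun j hj => ?_)
      · have hj3 : ¬ (j : ℕ) < 3 := by simpa [hd3] using hj
        rw [h1 j hj]
        unfold baseP
        rw [if_neg hj3]
        exact good_zero hml
      · have hjd : j ∉ hd3 := by simp [hd3]; omega
        rw [h1 j hjd]
        unfold baseP
        rw [if_neg (by omega)]
        simp)
    hC
  -- assemble
  refine ⟨hD, wA.append (wB.append (wC.append wD)), ?_⟩
  rw [SimpleGraph.Walk.length_append, SimpleGraph.Walk.length_append,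
    SimpleGraph.Walk.length_append]
  have bA : ∑ i, (n i - pA l m n i).natAbs ≤ 22 * (l + b) :=
    sum_le_22 _ _ (fun i => le_trans (pA_dist_le hml n i) (by omega))
  have bB : ∑ i, (pA l m n i - pB l m J₀ n i).natAbs ≤ 22 * (l + b) := by
    refine sum_le_22 _ _ (fun i => ?_)
    unfold pB
    by_cases h : 3 ≤ (i : ℕ) ∧ i ∈ J₀
    · rw [if_pos h]
      have := hbd' i h.1
      rw [abs_le] at this
      omega
    · rw [if_neg h]; simp
  have bC : ∑ i, (pB l m J₀ n i - baseP (pA l m n) i).natAbs ≤ 22 * (l + b) := by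
    refine sum_le_22 _ _ (fun i => ?_)
    by_cases h3 : (i : ℕ) < 3
    · have e1 : pB l m J₀ n i = pA l m n i := by unfold pB; rw [if_neg (by omega)]
      have e2 : baseP (pA l m n) i = pA l m n i := by unfold baseP; rw [if_pos h3]
      rw [e1, e2]; simp
    · have e2 : baseP (pA l m n) i = 0 := by unfold baseP; rw [if_neg h3]
      rw [e2]
      have := hBbd i (by omega)
      rw [abs_le] at this
      omega
  have bD : ∑ i, (baseP (pA l m n) i - baseP n i).natAbs ≤ 22 * (l + b) := by
    refine sum_le_22 _ _ (fun i => ?_)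
    unfold baseP
    by_cases h3 : (i : ℕ) < 3
    · rw [if_pos h3, if_pos h3]
      have h := pA_dist_le hml n i
      omega
    · rw [if_neg h3, if_neg h3]; simp
  omega

end Key

end Stmt14aux

namespace Stmt14aux
open SimpleGraph Finset

/-! ### Transfer of walks to the component, projections, distances -/

lemma transfer {F F' : Set (Fin 22 → ℤ)}
    (hcl : ∀ ⦃x y : Fin 22 → ℤ⦄, x ∈ F' → y ∈ F → (latticeGraph 22).Adj x y → y ∈ F') :
    ∀ {a c : F} (w : ((latticeGraph 22).induce F).Walk a c)
      (ha : (a : Fin 22 → ℤ) ∈ F'),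
    ∃ (hc : (c : Fin 22 → ℤ) ∈ F')
      (w' : ((latticeGraph 22).induce F').Walk ⟨a, ha⟩ ⟨c, hc⟩), w'.length = w.length := by
  intro a c w
  induction w with
  | nil => intro ha; exact ⟨ha, SimpleGraph.Walk.nil, rfl⟩
  | @cons u v z h w ih =>
    intro ha
    have hadj : (latticeGraph 22).Adj (u : Fin 22 → ℤ) (v : Fin 22 → ℤ) := h
    have hv : (v : Fin 22 → ℤ) ∈ F' := hcl ha v.2 hadj
    obtain ⟨hc, w', hw'⟩ := ih hv
    refine ⟨hc, SimpleGraph.Walk.cons (show ((latticeGraph 22).induce F').Adj ⟨u, ha⟩ ⟨v, hv⟩ from hadj) w', ?_⟩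
    rw [SimpleGraph.Walk.length_cons, SimpleGraph.Walk.length_cons, hw']

def emb3 (j : Fin 3) : Fin 22 := ⟨(j : ℕ), by omega⟩

lemma emb3_inj : Function.Injective emb3 := by
  intro a c h
  have h2 : (emb3 a : ℕ) = (emb3 c : ℕ) := congrArg Fin.val h
  exact Fin.ext h2

lemma proj_sum_le_one {u v : Fin 22 → ℤ} (h : (latticeGraph 22).Adj u v) :
    ∑ j : Fin 3, (u (emb3 j) - v (emb3 j)).natAbs ≤ 1 := by
  have h1 : (∑ i : Fin 22, (u i - v i).natAbs) = 1 := h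
  have hmap := Finset.sum_map Finset.univ ⟨emb3, emb3_inj⟩ (fun i => (u i - v i).natAbs)
  simp only [Function.Embedding.coeFn_mk] at hmap
  rw [← hmap]
  rw [← h1]
  exact Finset.sum_le_sum_of_subset (Finset.subset_univ _)

lemma proj_le_walk {S : Set (Fin 22 → ℤ)} {a c : S}
    (w : ((latticeGraph 22).induce S).Walk a c) :
    ∑ j : Fin 3, ((a : Fin 22 → ℤ) (emb3 j) - (c : Fin 22 → ℤ) (emb3 j)).natAbs
      ≤ w.length := by
  induction w with
  | nil => simp
  | @cons u v z h w ih =>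
    rw [SimpleGraph.Walk.length_cons]
    have hadj : (latticeGraph 22).Adj (u : Fin 22 → ℤ) (v : Fin 22 → ℤ) := h
    have tri : ∑ j : Fin 3, ((u : Fin 22 → ℤ) (emb3 j) - (z : Fin 22 → ℤ) (emb3 j)).natAbs
        ≤ (∑ j : Fin 3, ((u : Fin 22 → ℤ) (emb3 j) - (v : Fin 22 → ℤ) (emb3 j)).natAbs)
          + ∑ j : Fin 3, ((v : Fin 22 → ℤ) (emb3 j) - (z : Fin 22 → ℤ) (emb3 j)).natAbs := by
      rw [← Finset.sum_add_distrib]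
      refine Finset.sum_le_sum fun j _ => ?_
      have hh : (u : Fin 22 → ℤ) (emb3 j) - (z : Fin 22 → ℤ) (emb3 j)
          = ((u : Fin 22 → ℤ) (emb3 j) - (v : Fin 22 → ℤ) (emb3 j))
            + ((v : Fin 22 → ℤ) (emb3 j) - (z : Fin 22 → ℤ) (emb3 j)) := by ring
      rw [hh]
      exact Int.natAbs_add_le _ _
    have hone := proj_sum_le_one hadj
    omega

lemma exists_walk_l1 {d : ℕ} (x y : Fin d → ℤ) :
    ∃ w : (latticeGraph d).Walk x y, w.length ≤ ∑ i, (x i - y i).natAbs := by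
  obtain ⟨hq, w, hw⟩ := walk_multi (S := (Set.univ : Set (Fin d → ℤ))) y Finset.univ x
    (fun i hi => absurd (Finset.mem_univ i) hi)
    (fun r i _ _ _ _ => Set.mem_univ r) (Set.mem_univ x)
  refine ⟨(w.map (latticeGraph d).induceUnivIso.toHom).copy rfl rfl, ?_⟩
  refine (SimpleGraph.Walk.length_copy _ _ _).trans_le ((SimpleGraph.Walk.length_map _ _).trans_le ?_)
  exact hw

lemma dist3_eq (x y : Fin 3 → ℤ) :
    (latticeGraph 3).dist x y = ∑ j, (x j - y j).natAbs := by
  obtain ⟨w, hw⟩ := exists_walk_l1 x y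
  refine le_antisymm (le_trans (SimpleGraph.dist_le w) hw) ?_
  obtain ⟨p, hp⟩ := (Reachable.exists_walk_length_eq_dist ⟨w⟩ :
    ∃ p : (latticeGraph 3).Walk x y, p.length = (latticeGraph 3).dist x y)
  rw [← hp]
  exact l1_le_walk_length p

lemma sum_baseP (a c : Fin 22 → ℤ) :
    ∑ i, (baseP a i - baseP c i).natAbs = ∑ j : Fin 3, (a (emb3 j) - c (emb3 j)).natAbs := by
  have hset : Finset.univ.filter (fun i : Fin 22 => (i : ℕ) < 3)
      = Finset.univ.map ⟨emb3, emb3_inj⟩ := by decide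
  rw [← Finset.sum_filter_add_sum_filter_not Finset.univ (fun i : Fin 22 => (i : ℕ) < 3)
    (fun i => (baseP a i - baseP c i).natAbs)]
  have h2 : ∑ i ∈ Finset.univ.filter (fun i : Fin 22 => ¬ (i : ℕ) < 3),
      (baseP a i - baseP c i).natAbs = 0 := by
    refine Finset.sum_eq_zero fun i hi => ?_
    have h3 : ¬ (i : ℕ) < 3 := by simpa using hi
    unfold baseP
    rw [if_neg h3, if_neg h3]
    simp
  have h4 : ∑ i ∈ Finset.univ.filter (fun i : Fin 22 => (i : ℕ) < 3),
      (baseP a i - baseP c i).natAbs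
      = ∑ i ∈ Finset.univ.filter (fun i : Fin 22 => (i : ℕ) < 3), (a i - c i).natAbs := by
    refine Finset.sum_congr rfl fun i hi => ?_
    have h3 : (i : ℕ) < 3 := by simpa using hi
    unfold baseP
    rw [if_pos h3, if_pos h3]
  rw [h2, add_zero, h4, hset, Finset.sum_map]
  simp only [Function.Embedding.coeFn_mk]

end Stmt14aux

namespace Stmt14aux
open SimpleGraph Finset

variable {l m b : ℕ}

lemma h0F (hml : 2 * m < l) : (fun _ => 0 : Fin 22 → ℤ) ∈ Fset l m b :=
  mem_Fset_of hd3 hd3_card (fun _ _ => good_zero hml) (fun _ _ => by simp)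

/-- F0 is closed under taking F-neighbours. -/
lemma hcl :
    ∀ ⦃x y : Fin 22 → ℤ⦄, x ∈ F0 l m b → y ∈ Fset l m b → (latticeGraph 22).Adj x y →
      y ∈ F0 l m b := by
  intro x y hx hy hadj
  obtain ⟨hn, h0, hr⟩ := hx
  have hadj' : ((latticeGraph 22).induce (Fset l m b)).Adj ⟨x, hn⟩ ⟨y, hy⟩ := hadj
  exact ⟨hy, h0, hr.trans hadj'.reachable⟩

lemma F0_sub : F0 l m b ⊆ Fset l m b := fun n hn => hn.1

/-- Walk in `induce Fset` between base points. -/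
lemma walk_base (hml : 2 * m < l) {a c : Fin 22 → ℤ}
    (ha : baseP a ∈ Fset l m b) :
    ∃ (hc : baseP c ∈ Fset l m b)
      (w : ((latticeGraph 22).induce (Fset l m b)).Walk ⟨baseP a, ha⟩ ⟨baseP c, hc⟩),
      w.length ≤ ∑ j : Fin 3, (a (emb3 j) - c (emb3 j)).natAbs := by
  obtain ⟨hc, w, hw⟩ := walk_multi (S := Fset l m b) (baseP c) hd3 (baseP a)
    (fun i hi => by
      have h3 : ¬ (i : ℕ) < 3 := by simpa [hd3] using hi
      unfold baseP
      rw [if_neg h3, if_neg h3])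
    (fun r i hi h1 h2 h3 => by
      refine mem_Fset_of hd3 hd3_card (fun j hj => ?_) (fun j hj => ?_)
      · have hj3 : ¬ (j : ℕ) < 3 := by simpa [hd3] using hj
        rw [h1 j hj]
        unfold baseP
        rw [if_neg hj3]
        exact good_zero hml
      · have hjd : j ∉ hd3 := by simp [hd3]; omega
        rw [h1 j hjd]
        unfold baseP
        rw [if_neg (by omega)]
        simp)
    ha
  rw [sum_baseP] at hw
  exact ⟨hc, w, hw⟩

end Stmt14aux

set_option maxHeartbeats 2000000 in
/-- The component of the origin in the induced subgraph of `ℤ²²` on the slab `F`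
is roughly isometric to `ℤ³` (for `m < l/2` and `b ≥ m`). -/
theorem stmt14 (l m b : ℕ) (hml : 2 * m < l) (hmb : m ≤ b) :
    RoughIsom ((latticeGraph 22).induce (F0 l m b)) (latticeGraph 3) := by
  classical
  open Stmt14aux SimpleGraph in
  set K : ℕ := 88 * (l + b) with hKdef
  have hK0 : (0 : ℝ) ≤ (K : ℝ) := Nat.cast_nonneg _
  refine ⟨2 * (K : ℝ) + 2, by linarith, fun x => fun j => (x : Fin 22 → ℤ) (emb3 j), ?_, ?_⟩
  · intro x y
    obtain ⟨hxF, hx0, hrx⟩ := x.2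
    obtain ⟨hyF, hy0, hry⟩ := y.2
    set L : ℕ := ∑ j : Fin 3, ((x : Fin 22 → ℤ) (emb3 j) - (y : Fin 22 → ℤ) (emb3 j)).natAbs
      with hLdef
    have hHd : (latticeGraph 3).dist (fun j => (x : Fin 22 → ℤ) (emb3 j))
        (fun j => (y : Fin 22 → ℤ) (emb3 j)) = L := dist3_eq _ _
    -- lower bound : L ≤ dist in the component graph
    have hreach : ((latticeGraph 22).induce (F0 l m b)).Reachable x y := by
      have hrxy : ((latticeGraph 22).induce (Fset l m b)).Reachable ⟨x.1, hxF⟩ ⟨y.1, hyF⟩ :=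
        (hrx.symm.trans hry)
      obtain ⟨wxy⟩ := hrxy
      obtain ⟨hc, w', _⟩ := transfer hcl wxy x.2
      exact ⟨w'.copy (Subtype.ext rfl) (Subtype.ext rfl)⟩
    have hlow : L ≤ ((latticeGraph 22).induce (F0 l m b)).dist x y := by
      obtain ⟨p, hp⟩ := hreach.exists_walk_length_eq_dist
      rw [← hp]
      exact proj_le_walk p
    -- upper bound : dist ≤ L + 2K
    have hup : ((latticeGraph 22).induce (F0 l m b)).dist x y ≤ L + 2 * K := by
      obtain ⟨hbx, wX, hwX⟩ := key hml hxF
      obtain ⟨hby, wY, hwY⟩ := key hml hyF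
      obtain ⟨hby', wM, hwM⟩ := walk_base (c := y.1) hml hbx
      have hWend : (⟨baseP y.1, hby'⟩ : (Fset l m b : Set _))
          = ⟨baseP y.1, hby⟩ := Subtype.ext rfl
      have hWlen0 : (wX.append ((wM.copy rfl hWend).append wY.reverse)).length ≤ L + 2 * K := by
        rw [SimpleGraph.Walk.length_append, SimpleGraph.Walk.length_append,
          SimpleGraph.Walk.length_copy, SimpleGraph.Walk.length_reverse]
        omega
      obtain ⟨hyF0, W', hWlen⟩ :=
        transfer hcl (wX.append ((wM.copy rfl hWend).append wY.reverse)) x.2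
      have hdle := SimpleGraph.dist_le (W'.copy (Subtype.ext rfl) (Subtype.ext rfl))
      rw [SimpleGraph.Walk.length_copy, hWlen] at hdle
      exact le_trans hdle hWlen0
    rw [hHd]
    have hC1 : (1 : ℝ) ≤ 2 * (K : ℝ) + 2 := by linarith
    have hCpos : (0 : ℝ) < 2 * (K : ℝ) + 2 := by linarith
    have hDist : (0 : ℝ) ≤ (((latticeGraph 22).induce (F0 l m b)).dist x y : ℝ) :=
      Nat.cast_nonneg _
    have hlowR : (L : ℝ) ≤ (((latticeGraph 22).induce (F0 l m b)).dist x y : ℝ) := by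
      exact_mod_cast hlow
    have hupR : (((latticeGraph 22).induce (F0 l m b)).dist x y : ℝ) ≤ (L : ℝ) + 2 * K := by
      exact_mod_cast hup
    constructor
    · have h1 : (1 / (2 * (K : ℝ) + 2)) * (((latticeGraph 22).induce (F0 l m b)).dist x y : ℝ)
          ≤ (((latticeGraph 22).induce (F0 l m b)).dist x y : ℝ) := by
        refine mul_le_of_le_one_left hDist ?_
        rw [div_le_one hCpos]
        linarith
      linarith
    · have h2 : (((latticeGraph 22).induce (F0 l m b)).dist x y : ℝ)
          ≤ (2 * (K : ℝ) + 2) * (((latticeGraph 22).induce (F0 l m b)).dist x y : ℝ) := by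
        nlinarith
      linarith
  · -- almost surjectivity
    intro w
    set pw : Fin 22 → ℤ := fun i => if h : (i : ℕ) < 3 then w ⟨(i : ℕ), h⟩ else 0 with hpw
    obtain ⟨hpwF, wpw, _⟩ := Stmt14aux.walk_multi (S := Fset l m b) pw Stmt14aux.hd3
      (fun _ => 0)
      (fun i hi => by
        have h3 : ¬ (i : ℕ) < 3 := by simpa [Stmt14aux.hd3] using hi
        rw [hpw]
        simp only
        rw [dif_neg h3])
      (fun r i hi h1 h2 h3 => by
        refine Stmt14aux.mem_Fset_of Stmt14aux.hd3 Stmt14aux.hd3_card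
          (fun j hj => ?_) (fun j hj => ?_)
        · rw [h1 j hj]
          exact Stmt14aux.good_zero hml
        · have hjd : j ∉ Stmt14aux.hd3 := by simp [Stmt14aux.hd3]; omega
          rw [h1 j hjd]
          simp)
      (Stmt14aux.h0F hml)
    have hpwF0 : pw ∈ F0 l m b := ⟨hpwF, Stmt14aux.h0F hml, ⟨wpw⟩⟩
    refine ⟨⟨pw, hpwF0⟩, ?_⟩
    have hphi : (fun j => pw (Stmt14aux.emb3 j)) = w := by
      funext j
      rw [hpw]
      simp only
      have h3 : ((Stmt14aux.emb3 j : Fin 22) : ℕ) < 3 := j.2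
      rw [dif_pos h3]
      exact congrArg w (Fin.ext rfl)
    show ((latticeGraph 3).dist w (fun j => pw (Stmt14aux.emb3 j)) : ℝ) ≤ 2 * (K : ℝ) + 2
    rw [hphi, SimpleGraph.dist_self]
    simp only [Nat.cast_zero]
    have hK0 : (0 : ℝ) ≤ ((88 * (l + b) : ℕ) : ℝ) := Nat.cast_nonneg _
    linarith
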